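/- arXiv:1209.0180 — 4 statements merged into one kernel-verified Lean document; each statement's English description precedes it below -/
import Mathlib

section
/- Let n(x) := (2π)^{-1/2} exp(−x²/2) be the standard normal density and N(x) := ∫_{-∞}^x n(y) dy the standard normal distribution function, and define G(r,t) := 2·N(−r/√t) − 1 for r ∈ ℝ and t > 0. Let (Ω, F, P) be a probability space and A : Ω → ℝ a random variable with A > 0 almost surely. Define ζ(r) := E[G(r, A)] for r < 0. Then ζ is twice differentiable on (−∞, 0) with ζ'(r) = E[−(2/√A)·n(r/√A)] and ζ''(r) = E[(2r/A^{3/2})·n(r/√A)], so that ζ''(r) ≤ 0 for every r < 0 (ζ is concave on (−∞,0)), and moreover |ζ'(r)| ≤ 2/(|r|·√(2πe)) for every r < 0. -/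
open MeasureTheory

/-- The standard normal density `n(x) = (2π)^{-1/2} exp(-x²/2)`. -/
noncomputable def stdGaussPDF (x : ℝ) : ℝ :=
  (Real.sqrt (2 * Real.pi))⁻¹ * Real.exp (-x ^ 2 / 2)

/-- The standard normal distribution function `N(x) = ∫_{-∞}^x n(y) dy`. -/
noncomputable def stdGaussCDF (x : ℝ) : ℝ :=
  ∫ y in Set.Iic x, stdGaussPDF y

/-- `G(r,t) = 2 N(−r/√t) − 1`. -/
noncomputable def Gfun (r t : ℝ) : ℝ :=
  2 * stdGaussCDF (-r / Real.sqrt t) - 1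

/-!
Differentiate under the expectation. For fixed `t > 0` and `u = r / √t`,
`∂ᵣG(r,t) = -(2/√t) n(u)` and `∂ᵣ²G(r,t) = (2r/t^{3/2}) n(u)`, which is `≤ 0` for `r < 0`.
In absolute value these are `(2/|r|)·|u| n(u)` and `(2/r²)·|u|³ n(u)`; since `|u| n(u) ≤ n(1)`
and `|u|³ n(u)` is bounded, both are bounded uniformly in `t` for `r` away from `0`. This gives
dominated differentiation of `ζ` twice, the bound `|ζ'(r)| ≤ 2 n(1)/|r|` with
`n(1) = (2πe)^{-1/2}`, and concavity from `ζ'' ≤ 0`.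
-/

open Filter Topology Real

theorem abs_mul_exp_neg_sq_div_two_le (x : ℝ) : |x| * exp (-x ^ 2 / 2) ≤ exp (-1 / 2) := by
  have h : |x| ≤ exp ((x ^ 2 - 1) / 2) := by
    nlinarith [add_one_le_exp ((x ^ 2 - 1) / 2), sq_abs x, sq_nonneg (|x| - 1)]
  calc |x| * exp (-x ^ 2 / 2) ≤ exp ((x ^ 2 - 1) / 2) * exp (-x ^ 2 / 2) := by gcongr
    _ = exp (-1 / 2) := by rw [← exp_add]; ring_nf

theorem abs_pow_three_mul_exp_neg_sq_div_two_le (x : ℝ) : |x| ^ 3 * exp (-x ^ 2 / 2) ≤ 6 := by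
  have h₁ : (1 + x ^ 2 / 4) ^ 2 ≤ exp (x ^ 2 / 2) :=
    calc (1 + x ^ 2 / 4) ^ 2 ≤ exp (x ^ 2 / 4) ^ 2 :=
          pow_le_pow_left₀ (by positivity) (by linarith [add_one_le_exp (x ^ 2 / 4)]) 2
      _ = exp (x ^ 2 / 2) := by rw [← exp_nat_mul]; ring_nf
  have h₂ : |x| ^ 3 ≤ 6 * (1 + x ^ 2 / 4) ^ 2 := by
    nlinarith [sq_abs x, abs_nonneg x, sq_nonneg (|x| - 2), sq_nonneg (x ^ 2 - 2 * |x|)]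
  calc |x| ^ 3 * exp (-x ^ 2 / 2) ≤ 6 * exp (x ^ 2 / 2) * exp (-x ^ 2 / 2) := by gcongr; linarith
    _ = 6 := by rw [mul_assoc, ← exp_add]; ring_nf; simp

theorem stdGaussPDF_eq_gaussianPDFReal : stdGaussPDF = ProbabilityTheory.gaussianPDFReal 0 1 := by
  ext x
  simp [stdGaussPDF, ProbabilityTheory.gaussianPDFReal]

@[fun_prop]
theorem continuous_stdGaussPDF : Continuous stdGaussPDF := by
  unfold stdGaussPDF
  fun_prop

theorem stdGaussPDF_nonneg (x : ℝ) : 0 ≤ stdGaussPDF x := by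
  unfold stdGaussPDF
  positivity

theorem stdGaussPDF_neg (x : ℝ) : stdGaussPDF (-x) = stdGaussPDF x := by
  simp [stdGaussPDF]

theorem integrable_stdGaussPDF : Integrable stdGaussPDF := by
  rw [stdGaussPDF_eq_gaussianPDFReal]
  exact ProbabilityTheory.integrable_gaussianPDFReal 0 1

theorem integral_stdGaussPDF : ∫ x, stdGaussPDF x = 1 := by
  rw [stdGaussPDF_eq_gaussianPDFReal]
  exact ProbabilityTheory.integral_gaussianPDFReal_eq_one 0 one_ne_zero

theorem stdGaussPDF_one : stdGaussPDF 1 = (√(2 * π * exp 1))⁻¹ := by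
  rw [stdGaussPDF, sqrt_mul (by positivity : (0 : ℝ) ≤ 2 * π) (exp 1), ← exp_half, mul_inv,
    ← exp_neg]
  norm_num

theorem abs_mul_stdGaussPDF_le (x : ℝ) : |x| * stdGaussPDF x ≤ stdGaussPDF 1 := by
  unfold stdGaussPDF
  rw [mul_left_comm]
  gcongr
  simpa using abs_mul_exp_neg_sq_div_two_le x

theorem abs_pow_three_mul_stdGaussPDF_le (x : ℝ) : |x| ^ 3 * stdGaussPDF x ≤ 6 * stdGaussPDF 0 := by
  unfold stdGaussPDF
  rw [mul_left_comm]
  simpa [mul_comm] using mul_le_mul_of_nonneg_left (abs_pow_three_mul_exp_neg_sq_div_two_le x)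
    (inv_nonneg.2 (sqrt_nonneg (2 * π)))

theorem hasDerivAt_stdGaussPDF (x : ℝ) : HasDerivAt stdGaussPDF (-x * stdGaussPDF x) x := by
  have h : HasDerivAt (fun y : ℝ => -y ^ 2 / 2) (-x) x :=
    ((hasDerivAt_pow 2 x).neg.div_const 2).congr_deriv (by ring)
  unfold stdGaussPDF
  exact ((h.exp).const_mul _).congr_deriv (by ring)

theorem stdGaussCDF_nonneg (x : ℝ) : 0 ≤ stdGaussCDF x :=
  setIntegral_nonneg measurableSet_Iic fun y _ => stdGaussPDF_nonneg y

theorem stdGaussCDF_le_one (x : ℝ) : stdGaussCDF x ≤ 1 :=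
  integral_stdGaussPDF ▸ setIntegral_le_integral integrable_stdGaussPDF
    (Eventually.of_forall stdGaussPDF_nonneg)

theorem hasDerivAt_stdGaussCDF (x : ℝ) : HasDerivAt stdGaussCDF (stdGaussPDF x) x := by
  have h_eq : ∀ y, stdGaussCDF 0 + ∫ t in (0 : ℝ)..y, stdGaussPDF t = stdGaussCDF y := fun y => by
    rw [← intervalIntegral.integral_Iic_sub_Iic integrable_stdGaussPDF.integrableOn
      integrable_stdGaussPDF.integrableOn, stdGaussCDF, stdGaussCDF]
    ring
  have h := (intervalIntegral.integral_hasDerivAt_right (a := 0) (b := x)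
    integrable_stdGaussPDF.intervalIntegrable
    continuous_stdGaussPDF.aestronglyMeasurable.stronglyMeasurableAtFilter
    continuous_stdGaussPDF.continuousAt).const_add (stdGaussCDF 0)
  simpa only [h_eq] using h

@[fun_prop]
theorem continuous_stdGaussCDF : Continuous stdGaussCDF :=
  continuous_iff_continuousAt.2 fun x => (hasDerivAt_stdGaussCDF x).continuousAt

noncomputable def Gfun' (r t : ℝ) : ℝ :=
  -(2 / √t) * stdGaussPDF (r / √t)

noncomputable def Gfun'' (r t : ℝ) : ℝ :=
  2 * r / t ^ ((3 : ℝ) / 2) * stdGaussPDF (r / √t)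

theorem abs_Gfun_le_one (r t : ℝ) : |Gfun r t| ≤ 1 := by
  rw [Gfun, abs_le]
  constructor <;> linarith [stdGaussCDF_nonneg (-r / √t), stdGaussCDF_le_one (-r / √t)]

theorem measurable_Gfun (r : ℝ) : Measurable (Gfun r) := by
  unfold Gfun
  fun_prop

theorem measurable_Gfun' (r : ℝ) : Measurable (Gfun' r) := by
  unfold Gfun'
  fun_prop

theorem measurable_Gfun'' (r : ℝ) : Measurable (Gfun'' r) := by
  unfold Gfun''
  fun_prop

theorem rpow_three_halves_eq_sqrt_pow_three {t : ℝ} (ht : 0 ≤ t) : t ^ ((3 : ℝ) / 2) = √t ^ 3 := by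
  rw [sqrt_eq_rpow, ← rpow_natCast, ← rpow_mul ht]
  norm_num

theorem hasDerivAt_Gfun {t : ℝ} (ht : 0 < t) (r : ℝ) : HasDerivAt (Gfun · t) (Gfun' r t) r := by
  have hs : 0 < √t := sqrt_pos.2 ht
  have h := (((hasDerivAt_stdGaussCDF (-r / √t)).comp r
    ((hasDerivAt_id r).neg.div_const √t)).const_mul 2).sub_const 1
  refine h.congr_deriv ?_
  rw [Gfun', neg_div, stdGaussPDF_neg]
  field_simp

theorem hasDerivAt_Gfun' {t : ℝ} (ht : 0 < t) (r : ℝ) : HasDerivAt (Gfun' · t) (Gfun'' r t) r := by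
  have hs : 0 < √t := sqrt_pos.2 ht
  have h := ((hasDerivAt_stdGaussPDF (r / √t)).comp r
    ((hasDerivAt_id r).div_const √t)).const_mul (-(2 / √t))
  refine h.congr_deriv ?_
  rw [Gfun'', rpow_three_halves_eq_sqrt_pow_three ht.le]
  field_simp

theorem abs_Gfun'_le {r t : ℝ} (hr : r ≠ 0) (ht : 0 < t) :
    |Gfun' r t| ≤ 2 / (|r| * √(2 * π * exp 1)) := by
  have hs : 0 < √t := sqrt_pos.2 ht
  have h_eq : |Gfun' r t| = 2 / |r| * (|r / √t| * stdGaussPDF (r / √t)) := by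
    rw [Gfun', abs_mul, abs_neg, abs_of_nonneg (stdGaussPDF_nonneg _), abs_div, abs_div,
      abs_of_pos hs, abs_two]
    field_simp
  calc |Gfun' r t| ≤ 2 / |r| * stdGaussPDF 1 := by
        rw [h_eq]
        exact mul_le_mul_of_nonneg_left (abs_mul_stdGaussPDF_le _) (by positivity)
    _ = 2 / (|r| * √(2 * π * exp 1)) := by rw [stdGaussPDF_one]; ring

theorem abs_Gfun''_le {r t : ℝ} (hr : r ≠ 0) (ht : 0 < t) :
    |Gfun'' r t| ≤ 12 * stdGaussPDF 0 / |r| ^ 2 := by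
  have hs : 0 < √t := sqrt_pos.2 ht
  have h_eq : |Gfun'' r t| = 2 / |r| ^ 2 * (|r / √t| ^ 3 * stdGaussPDF (r / √t)) := by
    rw [Gfun'', rpow_three_halves_eq_sqrt_pow_three ht.le, abs_mul, abs_div, abs_mul,
      abs_of_nonneg (stdGaussPDF_nonneg _), abs_two, abs_of_pos (pow_pos hs 3), abs_div,
      abs_of_pos hs]
    field_simp
  calc |Gfun'' r t| ≤ 2 / |r| ^ 2 * (6 * stdGaussPDF 0) := by
        rw [h_eq]
        exact mul_le_mul_of_nonneg_left (abs_pow_three_mul_stdGaussPDF_le _) (by positivity)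
    _ = 12 * stdGaussPDF 0 / |r| ^ 2 := by ring

theorem Gfun''_nonpos {r t : ℝ} (hr : r ≤ 0) (ht : 0 ≤ t) : Gfun'' r t ≤ 0 :=
  mul_nonpos_of_nonpos_of_nonneg (div_nonpos_of_nonpos_of_nonneg (by linarith) (rpow_nonneg ht _))
    (stdGaussPDF_nonneg _)

section Expectation

variable {Ω : Type*} [MeasurableSpace Ω] {μ : Measure Ω} {A : Ω → ℝ}

theorem hasDerivAt_integral_comp_of_abs_deriv_le [IsFiniteMeasure μ] {T s : Set ℝ}
    {F F' : ℝ → ℝ → ℝ} {x₀ C : ℝ} (hA : Measurable A) (hAT : ∀ᵐ ω ∂μ, A ω ∈ T)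
    (hF_meas : ∀ x, Measurable (F x)) (hF'_meas : Measurable (F' x₀))
    (hF_int : Integrable (fun ω => F x₀ (A ω)) μ) (hs : s ∈ 𝓝 x₀)
    (h_diff : ∀ t ∈ T, ∀ x ∈ s, HasDerivAt (F · t) (F' x t) x)
    (h_bound : ∀ t ∈ T, ∀ x ∈ s, |F' x t| ≤ C) :
    Integrable (fun ω => F' x₀ (A ω)) μ ∧
      HasDerivAt (fun x => ∫ ω, F x (A ω) ∂μ) (∫ ω, F' x₀ (A ω) ∂μ) x₀ :=
  hasDerivAt_integral_of_dominated_loc_of_deriv_le (bound := fun _ => C) hs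
    (Eventually.of_forall fun x => ((hF_meas x).comp hA).aestronglyMeasurable) hF_int
    (hF'_meas.comp hA).aestronglyMeasurable
    (hAT.mono fun ω hω x hx => h_bound (A ω) hω x hx) (integrable_const C)
    (hAT.mono fun ω hω x hx => h_diff (A ω) hω x hx)

theorem hasDerivAt_integral_Gfun [IsFiniteMeasure μ] (hA : Measurable A)
    (hA_pos : ∀ᵐ ω ∂μ, 0 < A ω) {r : ℝ} (hr : r < 0) :
    Integrable (fun ω => Gfun' r (A ω)) μ ∧
      HasDerivAt (fun x => ∫ ω, Gfun x (A ω) ∂μ) (∫ ω, Gfun' r (A ω) ∂μ) r := by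
  have h_int : Integrable (fun ω => Gfun r (A ω)) μ :=
    .of_bound ((measurable_Gfun r).comp hA).aestronglyMeasurable 1
      (Eventually.of_forall fun ω => abs_Gfun_le_one r (A ω))
  refine hasDerivAt_integral_comp_of_abs_deriv_le (T := Set.Ioi 0)
    (C := 2 / (|r / 2| * √(2 * π * exp 1))) hA hA_pos measurable_Gfun (measurable_Gfun' r) h_int
    (Iio_mem_nhds (by linarith : r < r / 2)) (fun t ht x _ => hasDerivAt_Gfun ht x)
    fun t ht x hx => (abs_Gfun'_le (by linarith [hx.out]) ht).trans ?_
  have : |r / 2| ≤ |x| := abs_le_abs_of_nonpos (by linarith) (le_of_lt hx)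
  have : 0 < |r / 2| := abs_pos.2 (by linarith)
  gcongr

theorem hasDerivAt_integral_Gfun' [IsFiniteMeasure μ] (hA : Measurable A)
    (hA_pos : ∀ᵐ ω ∂μ, 0 < A ω) {r : ℝ} (hr : r < 0) :
    Integrable (fun ω => Gfun'' r (A ω)) μ ∧
      HasDerivAt (fun x => ∫ ω, Gfun' x (A ω) ∂μ) (∫ ω, Gfun'' r (A ω) ∂μ) r := by
  refine hasDerivAt_integral_comp_of_abs_deriv_le (T := Set.Ioi 0)
    (C := 12 * stdGaussPDF 0 / |r / 2| ^ 2) hA hA_pos measurable_Gfun' (measurable_Gfun'' r)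
    (hasDerivAt_integral_Gfun hA hA_pos hr).1
    (Iio_mem_nhds (by linarith : r < r / 2)) (fun t ht x _ => hasDerivAt_Gfun' ht x)
    fun t ht x hx => (abs_Gfun''_le (by linarith [hx.out]) ht).trans ?_
  have : |r / 2| ≤ |x| := abs_le_abs_of_nonpos (by linarith) (le_of_lt hx)
  have : 0 < |r / 2| := abs_pos.2 (by linarith)
  have := stdGaussPDF_nonneg 0
  gcongr

theorem abs_integral_Gfun'_le [IsProbabilityMeasure μ] (hA_pos : ∀ᵐ ω ∂μ, 0 < A ω) {r : ℝ}
    (hr : r ≠ 0) : |∫ ω, Gfun' r (A ω) ∂μ| ≤ 2 / (|r| * √(2 * π * exp 1)) := by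
  simpa using norm_integral_le_of_norm_le_const (f := fun ω => Gfun' r (A ω))
    (hA_pos.mono fun _ hω => abs_Gfun'_le hr hω)

theorem integral_Gfun''_nonpos (hA_pos : ∀ᵐ ω ∂μ, 0 < A ω) {r : ℝ} (hr : r ≤ 0) :
    ∫ ω, Gfun'' r (A ω) ∂μ ≤ 0 :=
  integral_nonpos_of_ae (hA_pos.mono fun _ hω => Gfun''_nonpos hr hω.le)

end Expectation

/-- if `A > 0` a.s. and `ζ(r) := E[G(r,A)]`, then on `(−∞,0)` the
function `ζ` is twice differentiable with `ζ'(r) = E[−(2/√A) n(r/√A)]` and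
`ζ''(r) = E[(2r/A^{3/2}) n(r/√A)] ≤ 0` (so `ζ` is concave on `(−∞,0)`), and
`|ζ'(r)| ≤ 2/(|r|√(2πe))` for every `r < 0`. -/
theorem stmt_8 {Ω : Type*} [MeasurableSpace Ω] {μ : Measure Ω} [IsProbabilityMeasure μ]
    (A : Ω → ℝ) (hA_meas : Measurable A) (hA_pos : ∀ᵐ ω ∂μ, 0 < A ω) :
    (∀ r : ℝ, r < 0 →
      HasDerivAt (fun x => ∫ ω, Gfun x (A ω) ∂μ)
        (∫ ω, -(2 / Real.sqrt (A ω)) * stdGaussPDF (r / Real.sqrt (A ω)) ∂μ) r ∧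
      HasDerivAt (fun x => ∫ ω, -(2 / Real.sqrt (A ω)) * stdGaussPDF (x / Real.sqrt (A ω)) ∂μ)
        (∫ ω, 2 * r / A ω ^ ((3 : ℝ) / 2) * stdGaussPDF (r / Real.sqrt (A ω)) ∂μ) r ∧
      (∫ ω, 2 * r / A ω ^ ((3 : ℝ) / 2) * stdGaussPDF (r / Real.sqrt (A ω)) ∂μ) ≤ 0 ∧
      |∫ ω, -(2 / Real.sqrt (A ω)) * stdGaussPDF (r / Real.sqrt (A ω)) ∂μ|
        ≤ 2 / (|r| * Real.sqrt (2 * Real.pi * Real.exp 1))) ∧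
    ConcaveOn ℝ (Set.Iio 0) (fun x => ∫ ω, Gfun x (A ω) ∂μ) := by
  have hζ' (r : ℝ) (hr : r < 0) :
      HasDerivAt (fun x => ∫ ω, Gfun x (A ω) ∂μ) (∫ ω, Gfun' r (A ω) ∂μ) r :=
    (hasDerivAt_integral_Gfun hA_meas hA_pos hr).2
  have hζ'' (r : ℝ) (hr : r < 0) :
      HasDerivAt (fun x => ∫ ω, Gfun' x (A ω) ∂μ) (∫ ω, Gfun'' r (A ω) ∂μ) r :=
    (hasDerivAt_integral_Gfun' hA_meas hA_pos hr).2
  refine ⟨fun r hr => ⟨hζ' r hr, hζ'' r hr, integral_Gfun''_nonpos hA_pos hr.le,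
    abs_integral_Gfun'_le hA_pos hr.ne⟩, ?_⟩
  refine concaveOn_of_hasDerivWithinAt2_nonpos (f' := fun r => ∫ ω, Gfun' r (A ω) ∂μ)
    (f'' := fun r => ∫ ω, Gfun'' r (A ω) ∂μ) (convex_Iio 0)
    (fun r hr => (hζ' r hr).continuousAt.continuousWithinAt) ?_ ?_ ?_ <;> rw [interior_Iio]
  · exact fun r hr => (hζ' r hr).hasDerivWithinAt
  · exact fun r hr => (hζ'' r hr).hasDerivWithinAt
  · exact fun r hr => integral_Gfun''_nonpos hA_pos hr.out.le
end

section
/- Fix c ∈ (−1, 1) and set k := 5 − 4√(1−c²). Define φ : ℝ × ℝ × ℝ → ℝ by φ(r,z,t) := r⁴ + 6k·r²z²·t + 3k·(r² + k·z⁴ − 4c·r·z²)·t² + k·((7k + 8c²)·z² − 4c·r)·t³ + (7k²/4 + 2c²k)·t⁴. Then φ(r,z,0) = r⁴ for all r, z, and φ satisfies the partial differential equation (1/2)·k·z²·∂²φ/∂r² − c·z·∂²φ/∂r∂z + (1/2)·∂²φ/∂z² = ∂φ/∂t at every point (r,z,t) ∈ ℝ³. -/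
noncomputable def phi (c k r z t : ℝ) : ℝ :=
  r ^ 4 + 6 * k * r ^ 2 * z ^ 2 * t
    + 3 * k * (r ^ 2 + k * z ^ 4 - 4 * c * r * z ^ 2) * t ^ 2
    + k * ((7 * k + 8 * c ^ 2) * z ^ 2 - 4 * c * r) * t ^ 3
    + (7 * k ^ 2 / 4 + 2 * c ^ 2 * k) * t ^ 4

section

variable (c k r z t : ℝ)

theorem phi_zero : phi c k r z 0 = r ^ 4 := by
  simp [phi]

theorem deriv_phi_r :
    deriv (fun r => phi c k r z t) r
      = 4 * r ^ 3 + 12 * k * r * z ^ 2 * t + 6 * k * r * t ^ 2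
        - 12 * c * k * z ^ 2 * t ^ 2 - 4 * c * k * t ^ 3 := by
  simp (disch := fun_prop) only [phi, deriv_fun_add, deriv_fun_sub, deriv_fun_mul,
    deriv_fun_pow, deriv_const', deriv_id'', deriv_const_mul_id]
  ring

theorem deriv_phi_z :
    deriv (fun z => phi c k r z t) z
      = 12 * k * r ^ 2 * z * t + 12 * k ^ 2 * z ^ 3 * t ^ 2 - 24 * c * k * r * z * t ^ 2
        + 2 * k * (7 * k + 8 * c ^ 2) * z * t ^ 3 := by
  simp (disch := fun_prop) only [phi, deriv_fun_add, deriv_fun_sub, deriv_fun_mul,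
    deriv_fun_pow, deriv_const', deriv_id'']
  ring

theorem deriv_phi_t :
    deriv (fun t => phi c k r z t) t
      = 6 * k * r ^ 2 * z ^ 2 + 6 * k * (r ^ 2 + k * z ^ 4 - 4 * c * r * z ^ 2) * t
        + 3 * k * ((7 * k + 8 * c ^ 2) * z ^ 2 - 4 * c * r) * t ^ 2
        + (7 * k ^ 2 + 8 * c ^ 2 * k) * t ^ 3 := by
  simp (disch := fun_prop) only [phi, deriv_fun_add, deriv_fun_sub, deriv_fun_mul,
    deriv_fun_pow, deriv_const', deriv_id'', deriv_const_mul_id]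
  ring

theorem deriv_deriv_phi_rr :
    deriv (fun r => deriv (fun r => phi c k r z t) r) r
      = 12 * r ^ 2 + 12 * k * z ^ 2 * t + 6 * k * t ^ 2 := by
  simp (disch := fun_prop) only [deriv_phi_r, deriv_fun_add, deriv_fun_sub, deriv_fun_mul,
    deriv_fun_pow, deriv_const', deriv_id'', deriv_const_mul_id]
  ring

theorem deriv_deriv_phi_rz :
    deriv (fun z => deriv (fun r => phi c k r z t) r) z
      = 24 * k * r * z * t - 24 * c * k * z * t ^ 2 := by
  simp (disch := fun_prop) only [deriv_phi_r, deriv_fun_add, deriv_fun_sub, deriv_fun_mul,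
    deriv_fun_pow, deriv_const', deriv_id'']
  ring

theorem deriv_deriv_phi_zz :
    deriv (fun z => deriv (fun z => phi c k r z t) z) z
      = 12 * k * r ^ 2 * t + 36 * k ^ 2 * z ^ 2 * t ^ 2 - 24 * c * k * r * t ^ 2
        + 2 * k * (7 * k + 8 * c ^ 2) * t ^ 3 := by
  simp (disch := fun_prop) only [deriv_phi_z, deriv_fun_add, deriv_fun_sub, deriv_fun_mul,
    deriv_fun_pow, deriv_const', deriv_id'', deriv_const_mul_id]
  ring

end

theorem stmt_14_general (c : ℝ) (k : ℝ)
    (φ : ℝ → ℝ → ℝ → ℝ)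
    (hφ : ∀ r z t : ℝ, φ r z t =
      r ^ 4 + 6 * k * r ^ 2 * z ^ 2 * t
        + 3 * k * (r ^ 2 + k * z ^ 4 - 4 * c * r * z ^ 2) * t ^ 2
        + k * ((7 * k + 8 * c ^ 2) * z ^ 2 - 4 * c * r) * t ^ 3
        + (7 * k ^ 2 / 4 + 2 * c ^ 2 * k) * t ^ 4) :
    (∀ r z : ℝ, φ r z 0 = r ^ 4) ∧
    (∀ r z t : ℝ,
      1 / 2 * k * z ^ 2 * deriv (fun r' => deriv (fun r'' => φ r'' z t) r') r
        - c * z * deriv (fun z' => deriv (fun r' => φ r' z' t) r) z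
        + 1 / 2 * deriv (fun z' => deriv (fun z'' => φ r z'' t) z') z
      = deriv (fun t' => φ r z t') t) := by
  obtain rfl : φ = phi c k := funext fun r => funext fun z => funext (hφ r z)
  refine ⟨phi_zero c k, fun r z t => ?_⟩
  rw [deriv_deriv_phi_rr, deriv_deriv_phi_rz, deriv_deriv_phi_zz, deriv_phi_t]
  ring

/-- for `c ∈ (−1,1)` and `k = 5 − 4√(1−c²)`, the explicit degree-4
polynomial `φ(r,z,t)` satisfies `φ(r,z,0) = r⁴` and the PDE
`(1/2) k z² ∂²φ/∂r² − c z ∂²φ/∂r∂z + (1/2) ∂²φ/∂z² = ∂φ/∂t` everywhere. -/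
theorem stmt_14 (c : ℝ) (hc : c ∈ Set.Ioo (-1 : ℝ) 1)
    (k : ℝ) (hk : k = 5 - 4 * Real.sqrt (1 - c ^ 2))
    (φ : ℝ → ℝ → ℝ → ℝ)
    (hφ : ∀ r z t : ℝ, φ r z t =
      r ^ 4 + 6 * k * r ^ 2 * z ^ 2 * t
        + 3 * k * (r ^ 2 + k * z ^ 4 - 4 * c * r * z ^ 2) * t ^ 2
        + k * ((7 * k + 8 * c ^ 2) * z ^ 2 - 4 * c * r) * t ^ 3
        + (7 * k ^ 2 / 4 + 2 * c ^ 2 * k) * t ^ 4) :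
    (∀ r z : ℝ, φ r z 0 = r ^ 4) ∧
    (∀ r z t : ℝ,
      1 / 2 * k * z ^ 2 * deriv (fun r' => deriv (fun r'' => φ r'' z t) r') r
        - c * z * deriv (fun z' => deriv (fun r' => φ r' z' t) r) z
        + 1 / 2 * deriv (fun z' => deriv (fun z'' => φ r z'' t) z') z
      = deriv (fun t' => φ r z t') t) :=
  stmt_14_general c k φ hφ
end

section
/- Fix r, z ∈ ℝ and T > 0. Define k : (−1,1) → ℝ by k(c) := 5 − 4√(1−c²), and ψ : (−1,1) → ℝ by ψ(c) := r⁴ + 6k(c)·r²z²·T + 3k(c)·(r² + k(c)·z⁴ − 4c·r·z²)·T² + k(c)·((7k(c) + 8c²)·z² − 4c·r)·T³ + (7k(c)²/4 + 2c²k(c))·T⁴. Then ψ is differentiable at c = 0 with ψ'(0) = −12·r·z²·T² − 4·r·T³. In particular, ψ'(0) ≠ 0 whenever r ≠ 0 and T > 0. -/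
/-!
Since `k(c) = 5 - 4√(1 - c²)` has a critical point at `c = 0` with `k(0) = 1`, differentiating `ψ`
at `0` only sees the explicit dependence on `c`; with `k` frozen at `1` this derivative is
`-12 r z² T² - 4 r T³ = -4 r T² (3 z² + T)`, which for `T > 0` vanishes only if `r = 0`.
-/

/-- The paper's `ψ^c(r, z, T)` as a function of the correlation `c`, with the function
`k(c) = 5 - 4√(1 - c²)` left as a parameter. -/
noncomputable def fourthMomentValue (r z T : ℝ) (k : ℝ → ℝ) (c : ℝ) : ℝ :=
  r ^ 4 + 6 * k c * r ^ 2 * z ^ 2 * T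
    + 3 * k c * (r ^ 2 + k c * z ^ 4 - 4 * c * r * z ^ 2) * T ^ 2
    + k c * ((7 * k c + 8 * c ^ 2) * z ^ 2 - 4 * c * r) * T ^ 3
    + (7 * (k c) ^ 2 / 4 + 2 * c ^ 2 * k c) * T ^ 4

theorem hasDerivAt_sqrt_one_sub_sq {x : ℝ} (hx : x ^ 2 < 1) :
    HasDerivAt (fun c : ℝ => √(1 - c ^ 2)) (-x / √(1 - x ^ 2)) x := by
  have h := ((hasDerivAt_pow 2 x).const_sub 1).sqrt (sub_pos.2 hx).ne'
  convert h using 1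
  field_simp
  ring

theorem hasDerivAt_fourthMomentValue {r z T c : ℝ} {k : ℝ → ℝ} (hk : HasDerivAt k 0 c) :
    HasDerivAt (fourthMomentValue r z T k)
      (k c * (-12 * r * z ^ 2 * T ^ 2 + (16 * c * z ^ 2 - 4 * r) * T ^ 3 + 4 * c * T ^ 4)) c := by
  have hid := hasDerivAt_id' c
  have hsq := hasDerivAt_pow 2 c
  have hT1 := (hk.const_mul 6).mul_const (r ^ 2 * z ^ 2 * T)
  have hT2 := ((hk.const_mul 3).mul ((hk.mul_const (z ^ 4)).const_add (r ^ 2) |>.sub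
    (hid.const_mul (4 * r * z ^ 2)))).mul_const (T ^ 2)
  have hT3 := (hk.mul (((hk.const_mul 7).add (hsq.const_mul 8)).mul_const (z ^ 2) |>.sub
    (hid.const_mul (4 * r)))).mul_const (T ^ 3)
  have hT4 := (((hk.pow 2).const_mul (7 / 4)).add ((hsq.const_mul 2).mul hk)).mul_const (T ^ 4)
  have h := (((hT1.const_add (r ^ 4)).add hT2).add hT3).add hT4
  refine (h.congr_of_eventuallyEq (.of_forall fun x => ?_)).congr_deriv ?_
  · simp only [fourthMomentValue, Pi.add_apply, Pi.sub_apply, Pi.mul_apply, Pi.pow_apply]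
    ring
  · simp only [Pi.add_apply, Pi.sub_apply]
    ring

/-- with `k(c) = 5 − 4√(1−c²)` and `ψ(c)` the explicit
fourth-moment value function, `ψ` is differentiable at `c = 0` with
`ψ'(0) = −12 r z² T² − 4 r T³`, which is nonzero whenever `r ≠ 0` (and `T > 0`). -/
theorem stmt_15 (r z T : ℝ) (hT : 0 < T)
    (k : ℝ → ℝ) (hk : ∀ c, k c = 5 - 4 * Real.sqrt (1 - c ^ 2))
    (ψ : ℝ → ℝ)
    (hψ : ∀ c, ψ c =
      r ^ 4 + 6 * k c * r ^ 2 * z ^ 2 * T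
        + 3 * k c * (r ^ 2 + k c * z ^ 4 - 4 * c * r * z ^ 2) * T ^ 2
        + k c * ((7 * k c + 8 * c ^ 2) * z ^ 2 - 4 * c * r) * T ^ 3
        + (7 * (k c) ^ 2 / 4 + 2 * c ^ 2 * k c) * T ^ 4) :
    HasDerivAt ψ (-12 * r * z ^ 2 * T ^ 2 - 4 * r * T ^ 3) 0 ∧
    (r ≠ 0 → -12 * r * z ^ 2 * T ^ 2 - 4 * r * T ^ 3 ≠ 0) := by
  have hk_zero : k 0 = 1 := by norm_num [hk]
  have hk_deriv : HasDerivAt k 0 0 := by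
    rw [show k = fun c => 5 - 4 * √(1 - c ^ 2) from funext hk]
    simpa using ((hasDerivAt_sqrt_one_sub_sq (x := 0) (by norm_num)).const_mul 4).const_sub 5
  have hψ_eq : ψ = fourthMomentValue r z T k := funext hψ
  have hfactor : -12 * r * z ^ 2 * T ^ 2 - 4 * r * T ^ 3 = -4 * r * T ^ 2 * (3 * z ^ 2 + T) := by
    ring
  refine ⟨?_, fun hr => ?_⟩
  · rw [hψ_eq]
    convert hasDerivAt_fourthMomentValue (r := r) (z := z) (T := T) hk_deriv using 1
    rw [hk_zero]
    ring
  · rw [hfactor]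
    have hpos : 0 < 3 * z ^ 2 + T := by positivity
    exact mul_ne_zero (mul_ne_zero (by simpa using hr) (by positivity)) hpos.ne'
end

section
/- Let T > 0, z₀ > 0 and m ∈ ℝ, and let γ be the Gaussian measure on ℝ with mean 0 and variance T. Let φ : ℝ → [0,∞) be a convex function, not identically zero, with φ(x) = 0 for every x ≤ m + 3z₀. Then ∫ φ(m − 3z₀·(exp(u − T/2) − 1)) dγ(u) = 0, while ∫ φ(m + z₀·(exp(u − T/2) − 1)) dγ(u) > 0 (the second integral taken in [0, ∞], possibly infinite). -/
/-!
The mirror-coupling argument `m - 3z₀(e^{u-T/2} - 1)` never exceeds `m + 3z₀`, where `φ`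
vanishes, so the first integral is zero. For the synchronous coupling, a convex function
vanishing on `(-∞, a]` is nonnegative and nondecreasing on `[a, ∞)`, so if `φ x₀ ≠ 0` then
`φ ≥ φ x₀ > 0` on `[x₀, ∞)`. The argument `m + z₀(e^{u-T/2} - 1)` exceeds `x₀` on a whole
ray of `u`, which has positive Gaussian measure when `T > 0`.
-/

open MeasureTheory ProbabilityTheory Set Filter

namespace ConvexOn

variable {φ : ℝ → ℝ} {a : ℝ}

lemma nonneg_of_eq_zero_on_Iic (hφ : ConvexOn ℝ univ φ) (h0 : ∀ x ≤ a, φ x = 0) (x : ℝ) :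
    0 ≤ φ x := by
  rcases le_or_gt x a with hxa | hax
  · exact (h0 x hxa).ge
  · have hslope := hφ.slope_mono_adjacent (mem_univ (a - 1)) (mem_univ x) (by linarith) hax
    rw [h0 a le_rfl, h0 (a - 1) (by linarith)] at hslope
    have := (le_div_iff₀ (sub_pos.2 hax)).1 (by simpa using hslope)
    linarith

lemma monotoneOn_of_eq_zero_on_Iic (hφ : ConvexOn ℝ univ φ) (h0 : ∀ x ≤ a, φ x = 0) :
    MonotoneOn φ (Ici a) := by
  intro x hx y _ hxy
  rcases hxy.eq_or_lt with rfl | hxy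
  · exact le_rfl
  · have hx' : a - 1 < x := by linarith [mem_Ici.1 hx]
    have hslope := hφ.slope_mono_adjacent (mem_univ (a - 1)) (mem_univ y) hx' hxy
    rw [h0 (a - 1) (by linarith), sub_zero] at hslope
    have hx_slope : 0 ≤ φ x / (x - (a - 1)) :=
      div_nonneg (hφ.nonneg_of_eq_zero_on_Iic h0 x) (by linarith)
    have := (le_div_iff₀ (sub_pos.2 hxy)).1 (hx_slope.trans hslope)
    linarith

end ConvexOn

lemma tendsto_add_mul_exp_sub_one_atTop {z₀ : ℝ} (hz₀ : 0 < z₀) (m s : ℝ) :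
    Tendsto (fun u => m + z₀ * (Real.exp (u - s) - 1)) atTop atTop :=
  tendsto_atTop_add_const_left _ _ <| Tendsto.const_mul_atTop hz₀ <|
    tendsto_atTop_add_const_right _ _ <|
      Real.tendsto_exp_atTop.comp (tendsto_atTop_add_const_right _ _ tendsto_id)

lemma gaussianReal_Ici_pos (μ : ℝ) {v : NNReal} (hv : v ≠ 0) (c : ℝ) :
    0 < gaussianReal μ v (Ici c) := by
  refine pos_iff_ne_zero.2 fun h => ?_
  simpa [Real.volume_Ici] using gaussianReal_absolutelyContinuous' μ hv h

lemma lintegral_pos_of_eventually_ge_atTop {μ : Measure ℝ} (hμ : ∀ c, 0 < μ (Ici c))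
    {f : ℝ → ENNReal} {ε : ENNReal} (hε : 0 < ε) (hf : ∀ᶠ u in atTop, ε ≤ f u) :
    0 < ∫⁻ u, f u ∂μ := by
  obtain ⟨c, hc⟩ := eventually_atTop.1 hf
  calc 0 < ε * μ (Ici c) := ENNReal.mul_pos hε.ne' (hμ c).ne'
    _ = ∫⁻ _ in Ici c, ε ∂μ := (setLIntegral_const _ _).symm
    _ ≤ ∫⁻ u in Ici c, f u ∂μ := setLIntegral_mono' measurableSet_Ici fun u hu => hc u hu
    _ ≤ ∫⁻ u, f u ∂μ := setLIntegral_le_lintegral _ _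

theorem stmt_17_general (T : ℝ) (hT : 0 < T) (z₀ m : ℝ) (hz₀ : 0 < z₀)
    (φ : ℝ → ℝ) (hφ_conv : ConvexOn ℝ Set.univ φ)
    (hφ_ne : ∃ x, φ x ≠ 0) (hφ_zero : ∀ x, x ≤ m + 3 * z₀ → φ x = 0) :
    (∫⁻ u, ENNReal.ofReal (φ (m - 3 * z₀ * (Real.exp (u - T / 2) - 1)))
        ∂(gaussianReal 0 T.toNNReal)) = 0 ∧
    0 < ∫⁻ u, ENNReal.ofReal (φ (m + z₀ * (Real.exp (u - T / 2) - 1)))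
        ∂(gaussianReal 0 T.toNNReal) := by
  refine ⟨?_, ?_⟩
  · have hmirror : ∀ u, φ (m - 3 * z₀ * (Real.exp (u - T / 2) - 1)) = 0 := fun u =>
      hφ_zero _ (by nlinarith [Real.exp_pos (u - T / 2)])
    simp [hmirror]
  · obtain ⟨x₀, hx₀⟩ := hφ_ne
    have hφx₀ : 0 < φ x₀ := (hφ_conv.nonneg_of_eq_zero_on_Iic hφ_zero x₀).lt_of_ne' hx₀
    have hx₀_mem : x₀ ∈ Ici (m + 3 * z₀) := le_of_not_ge fun h => hx₀ (hφ_zero x₀ h)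
    refine lintegral_pos_of_eventually_ge_atTop
      (gaussianReal_Ici_pos 0 (by simpa using hT)) (ENNReal.ofReal_pos.2 hφx₀) ?_
    filter_upwards [(tendsto_add_mul_exp_sub_one_atTop hz₀ m (T / 2)).eventually_ge_atTop x₀]
      with u hu
    exact ENNReal.ofReal_le_ofReal <|
      hφ_conv.monotoneOn_of_eq_zero_on_Iic hφ_zero hx₀_mem (hx₀_mem.trans hu) hu

/-- with `γ` the Gaussian measure of mean `0` and variance `T > 0`,
`z₀ > 0`, and `φ : ℝ → [0,∞)` convex, not identically zero, vanishing on
`(−∞, m + 3z₀]`, the mirror-coupling cost `∫ φ(m − 3z₀(e^{u−T/2} − 1)) dγ(u)`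
vanishes while the synchronous-coupling cost
`∫ φ(m + z₀(e^{u−T/2} − 1)) dγ(u)` is strictly positive (in `[0,∞]`). -/
theorem stmt_17 (T : ℝ) (hT : 0 < T) (z₀ m : ℝ) (hz₀ : 0 < z₀)
    (φ : ℝ → ℝ) (hφ_conv : ConvexOn ℝ Set.univ φ) (hφ_nonneg : ∀ x, 0 ≤ φ x)
    (hφ_ne : ∃ x, φ x ≠ 0) (hφ_zero : ∀ x, x ≤ m + 3 * z₀ → φ x = 0) :
    (∫⁻ u, ENNReal.ofReal (φ (m - 3 * z₀ * (Real.exp (u - T / 2) - 1)))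
        ∂(gaussianReal 0 T.toNNReal)) = 0 ∧
    0 < ∫⁻ u, ENNReal.ofReal (φ (m + z₀ * (Real.exp (u - T / 2) - 1)))
        ∂(gaussianReal 0 T.toNNReal) :=
  stmt_17_general T hT z₀ m hz₀ φ hφ_conv hφ_ne hφ_zero
end
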